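/- arXiv:1706.00385 — 3 statements merged into one kernel-verified Lean document; each statement's English description precedes it below -/
import Mathlib

section
/- Let W be the Weyl group of type C_{n+1} and P = P_k the maximal parabolic omitting s_k (with 1 < k ≤ n+1). Then the minimal length representative of the coset z_1 W_P := s_{2t_1} W_P is (2 < 3 < ⋯ < k < \overline{1}), and its length equals 2n+2-k. -/
def bar (n : ℕ) (i : Fin (2*n+2)) : Fin (2*n+2) := ⟨2*n+1 - i, by have := i.isLt; omega⟩

def IsSigned (n : ℕ) (w : Equiv.Perm (Fin (2*n+2))) : Prop :=
  ∀ i, w (bar n i) = bar n (w i)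

def IsOddSymp (n : ℕ) (w : Equiv.Perm (Fin (2*n+2))) : Prop :=
  ∀ j : Fin (2*n+2), (j : ℕ) < n+1 → (w j : ℕ) ≠ 2*n+1

def sgen (n : ℕ) (i : Fin (n+1)) : Equiv.Perm (Fin (2*n+2)) :=
  if h : (i : ℕ) < n then
    (Equiv.swap ⟨i, by omega⟩ ⟨(i : ℕ)+1, by omega⟩) *
      (Equiv.swap ⟨2*n - i, by omega⟩ ⟨2*n+1 - i, by omega⟩)
  else Equiv.swap ⟨n, by omega⟩ ⟨n+1, by omega⟩

noncomputable def len (n : ℕ) (w : Equiv.Perm (Fin (2*n+2))) : ℕ :=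
  sInf {m | ∃ l : List (Fin (n+1)), l.length = m ∧ (l.map (sgen n)).prod = w}

def WP (n k : ℕ) : Subgroup (Equiv.Perm (Fin (2*n+2))) :=
  Subgroup.closure {x | ∃ i : Fin (n+1), (i : ℕ) ≠ k - 1 ∧ x = sgen n i}

noncomputable def IsMinRep (n k : ℕ) (w : Equiv.Perm (Fin (2*n+2))) : Prop :=
  ∀ p ∈ WP n k, len n w ≤ len n (w * p)

noncomputable def cosetLen (n k : ℕ) (w : Equiv.Perm (Fin (2*n+2))) : ℕ :=
  sInf {m | ∃ p ∈ WP n k, len n (w * p) = m}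

def s2t1 (n : ℕ) : Equiv.Perm (Fin (2*n+2)) := Equiv.swap ⟨0, by omega⟩ ⟨2*n+1, by omega⟩

def st1t2 (n : ℕ) : Equiv.Perm (Fin (2*n+2)) :=
  Equiv.swap ⟨0, by omega⟩ ⟨2*n, by omega⟩ * Equiv.swap ⟨1, by omega⟩ ⟨2*n+1, by omega⟩

/-!
Count the inversions of a signed permutation of `{0, …, 2n+1}` together with its sign changes
(positions `≤ n` sent above `n`). Right multiplication by `s_i`, `i ≤ n`, adds at most two
inversions and no sign change, and by `s_{n+1}` at most one of each, so the count is at most twice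
the length. An element of `s_{2t_1} W_P` sends some position `p < k` to the top value and, being
signed, the mirror position `2n+1-p` to `0`; the pairs through these two positions give `4n+1-2p`
inversions and `p` is a sign change, so the count is at least `2(2n+2-k)`, while
`s_{2t_1} s_1 ⋯ s_{k-1}` has a word of length `2n+2-k`. In the case of equality `p = k-1` and
there are no other inversions; then the value at any other position `j` is the number of `i` with
a smaller value, namely `j - [p < j] + [j < 2n+1-p]`, which pins the element down as
`(2 < 3 < ⋯ < k < \overline 1)`.
-/

open Equiv.Perm Finset

lemma val_swap_mk_apply {m : ℕ} (a b : ℕ) (ha : a < m) (hb : b < m) (x : Fin m) :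
    ((Equiv.swap ⟨a, ha⟩ ⟨b, hb⟩ x : Fin m) : ℕ) =
      if (x : ℕ) = a then b else if (x : ℕ) = b then a else x := by
  rw [Equiv.swap_apply_def]
  split_ifs <;> simp_all [Fin.ext_iff]

lemma val_sgen_apply (n : ℕ) (i : Fin (n+1)) (x : Fin (2*n+2)) :
    (sgen n i x : ℕ) =
      if (x : ℕ) = i then (i : ℕ) + 1 else if (x : ℕ) = (i : ℕ) + 1 then i
      else if (x : ℕ) = 2*n - i then 2*n+1 - i else if (x : ℕ) = 2*n+1 - i then 2*n - i
      else x := by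
  have := i.isLt
  unfold sgen
  split_ifs <;> simp only [mul_apply, val_swap_mk_apply] <;> split_ifs <;> omega

lemma sgen_mul_self (n : ℕ) (i : Fin (n+1)) : sgen n i * sgen n i = 1 := by
  ext x
  have := i.isLt
  simp only [mul_apply, val_sgen_apply, one_apply]
  split_ifs <;> omega

lemma sgen_inv (n : ℕ) (i : Fin (n+1)) : (sgen n i)⁻¹ = sgen n i :=
  inv_eq_of_mul_eq_one_right (sgen_mul_self n i)

def signedPerms (n : ℕ) : Subgroup (Equiv.Perm (Fin (2*n+2))) where
  carrier := {w | IsSigned n w}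
  one_mem' _ := rfl
  mul_mem' hu hv x := by simp only [mul_apply, hv x, hu (_ : Fin _)]
  inv_mem' {w} hw x := w.injective (by simp only [coe_inv, Equiv.apply_symm_apply, hw (w.symm x)])

@[simp]
lemma mem_signedPerms {n : ℕ} {w : Equiv.Perm (Fin (2*n+2))} :
    w ∈ signedPerms n ↔ IsSigned n w :=
  Iff.rfl

lemma isSigned_sgen (n : ℕ) (i : Fin (n+1)) : IsSigned n (sgen n i) := by
  intro x
  ext
  have := i.isLt
  simp only [bar, val_sgen_apply]
  split_ifs <;> omega

lemma isSigned_s2t1 (n : ℕ) : IsSigned n (s2t1 n) := by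
  intro x
  ext
  simp only [bar, s2t1, val_swap_mk_apply, Fin.val_mk]
  split_ifs <;> omega

lemma WP_le_signedPerms (n k : ℕ) : WP n k ≤ signedPerms n :=
  (Subgroup.closure_le _).2 <| by rintro _ ⟨i, -, rfl⟩; exact isSigned_sgen n i

def lowBlockStabilizer (n k : ℕ) : Subgroup (Equiv.Perm (Fin (2*n+2))) where
  carrier := {q | ∀ j, (q j : ℕ) < k ↔ (j : ℕ) < k}
  one_mem' _ := Iff.rfl
  mul_mem' hu hv j := (hu _).trans (hv j)
  inv_mem' {q} hq j := by simpa using (hq (q⁻¹ j)).symm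

lemma WP_le_lowBlockStabilizer {n k : ℕ} (hkn : k ≤ n+1) : WP n k ≤ lowBlockStabilizer n k :=
  (Subgroup.closure_le _).2 <| by
    rintro _ ⟨i, hik, rfl⟩ j
    have := i.isLt
    simp only [val_sgen_apply]
    split_ifs <;> omega

section Words

def wordProd (n : ℕ) (l : List (Fin (n+1))) : Equiv.Perm (Fin (2*n+2)) := (l.map (sgen n)).prod

variable {n : ℕ}

lemma wordProd_append (l l' : List (Fin (n+1))) :
    wordProd n (l ++ l') = wordProd n l * wordProd n l' := by
  simp only [wordProd, List.map_append, List.prod_append]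

lemma wordProd_concat (l : List (Fin (n+1))) (i : Fin (n+1)) :
    wordProd n (l ++ [i]) = wordProd n l * sgen n i := by
  rw [wordProd_append]
  simp [wordProd]

lemma wordProd_reverse (l : List (Fin (n+1))) : wordProd n l.reverse = (wordProd n l)⁻¹ := by
  induction l with
  | nil => simp [wordProd]
  | cons i l ih =>
    have hcons : wordProd n (i :: l) = sgen n i * wordProd n l := by simp [wordProd]
    rw [List.reverse_cons, wordProd_concat, ih, hcons, mul_inv_rev, sgen_inv]

lemma wordProd_mem_WP {k : ℕ} {l : List (Fin (n+1))} (hl : ∀ i ∈ l, (i : ℕ) ≠ k - 1) :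
    wordProd n l ∈ WP n k :=
  list_prod_mem <| by
    simp only [List.mem_map]
    rintro _ ⟨i, hi, rfl⟩
    exact Subgroup.subset_closure ⟨i, hl i hi, rfl⟩

lemma exists_wordProd_eq_of_mem_WP {k : ℕ} {q : Equiv.Perm (Fin (2*n+2))} (hq : q ∈ WP n k) :
    ∃ l, wordProd n l = q := by
  induction hq using Subgroup.closure_induction with
  | mem _ h => obtain ⟨i, -, rfl⟩ := h; exact ⟨[i], by simp [wordProd]⟩
  | one => exact ⟨[], rfl⟩
  | mul _ _ _ _ hx hy =>
    obtain ⟨l, rfl⟩ := hx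
    obtain ⟨l', rfl⟩ := hy
    exact ⟨l ++ l', wordProd_append l l'⟩
  | inv _ _ hx => obtain ⟨l, rfl⟩ := hx; exact ⟨l.reverse, wordProd_reverse l⟩

lemma len_wordProd_le (l : List (Fin (n+1))) : len n (wordProd n l) ≤ l.length :=
  Nat.sInf_le ⟨l, rfl, rfl⟩

lemma exists_wordProd_eq_length_eq_len {w : Equiv.Perm (Fin (2*n+2))}
    (hw : ∃ l, wordProd n l = w) : ∃ l, wordProd n l = w ∧ l.length = len n w := by
  obtain ⟨l₀, hl₀⟩ := hw
  obtain ⟨l, hl, hlw⟩ := Nat.sInf_mem (⟨l₀.length, l₀, rfl, hl₀⟩ :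
    {m | ∃ l : List (Fin (n+1)), l.length = m ∧ (l.map (sgen n)).prod = w}.Nonempty)
  exact ⟨l, hlw, hl⟩

end Words

section Inversions

variable {m : ℕ}

def inversions (w : Equiv.Perm (Fin m)) : Finset (Fin m × Fin m) :=
  {q | q.1 < q.2 ∧ w q.2 < w q.1}

lemma card_inversions_mul_swap_le (w : Equiv.Perm (Fin m)) {a b : Fin m} (hab : (b : ℕ) = a + 1) :
    #(inversions (w * Equiv.swap a b)) ≤ #(inversions w) + 1 := by
  set σ := Equiv.swap a b
  have hsub :
      inversions (w * σ) ⊆ insert (a, b) ((inversions w).map (σ.prodCongr σ).toEmbedding) := by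
    rintro ⟨x, y⟩ hxy
    rw [mem_insert, mem_map_equiv]
    simp only [inversions, mem_filter, mem_univ, true_and, mul_apply, Equiv.prodCongr_symm,
      Equiv.prodCongr_apply, Prod.map, σ, Equiv.symm_swap, Prod.mk.injEq] at hxy ⊢
    refine or_iff_not_imp_left.2 fun hne => ⟨?_, hxy.2⟩
    have := hxy.1
    rw [Fin.lt_def] at this ⊢
    simp only [Equiv.swap_apply_def, Fin.ext_iff] at hne ⊢
    split_ifs <;> omega
  calc #(inversions (w * σ)) ≤ _ := card_le_card hsub
    _ ≤ _ := card_insert_le _ _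
    _ = _ := by rw [card_map]

end Inversions

section SignedInversions

variable {n : ℕ}

def negatives (n : ℕ) (w : Equiv.Perm (Fin (2*n+2))) : Finset (Fin (2*n+2)) :=
  {i | (i : ℕ) ≤ n ∧ n < (w i : ℕ)}

def signedInvCount (n : ℕ) (w : Equiv.Perm (Fin (2*n+2))) : ℕ :=
  #(inversions w) + #(negatives n w)

lemma signedInvCount_one : signedInvCount n 1 = 0 := by
  have hinv : inversions (1 : Equiv.Perm (Fin (2*n+2))) = ∅ :=
    filter_eq_empty_iff.2 fun q _ h => lt_asymm h.1 h.2
  have hneg : negatives n 1 = ∅ :=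
    filter_eq_empty_iff.2 fun i _ h => by rw [one_apply] at h; omega
  rw [signedInvCount, hinv, hneg, card_empty, card_empty]

lemma signedInvCount_mul_sgen_le (w : Equiv.Perm (Fin (2*n+2))) (i : Fin (n+1)) :
    signedInvCount n (w * sgen n i) ≤ signedInvCount n w + 2 := by
  have := i.isLt
  unfold sgen
  split_ifs with hi
  · have hneg : #(negatives n (w * sgen n i)) ≤ #(negatives n w) := by
      refine card_le_card_of_injOn (sgen n i) (fun j hj => ?_) (sgen n i).injective.injOn
      simp only [negatives, coe_filter, mem_univ, true_and, Set.mem_ofPred_eq, mul_apply] at hj ⊢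
      refine ⟨?_, hj.2⟩
      have := hj.1
      rw [val_sgen_apply]
      split_ifs <;> omega
    rw [sgen, dif_pos hi] at hneg
    have hinv₁ :=
      card_inversions_mul_swap_le w (a := ⟨i, by omega⟩) (b := ⟨i + 1, by omega⟩) rfl
    have hinv₂ :=
      card_inversions_mul_swap_le (w * Equiv.swap ⟨i, by omega⟩ ⟨i + 1, by omega⟩)
      (a := ⟨2*n - i, by omega⟩) (b := ⟨2*n+1 - i, by omega⟩) (by simp only; omega)
    rw [← mul_assoc] at hneg ⊢
    unfold signedInvCount
    omega
  · have hneg : negatives n (w * Equiv.swap ⟨n, by omega⟩ ⟨n+1, by omega⟩) ⊆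
        insert ⟨n, by omega⟩ (negatives n w) := by
      intro j hj
      rw [mem_insert]
      refine or_iff_not_imp_left.2 fun hjn => ?_
      simp only [negatives, mem_filter, mem_univ, true_and, mul_apply] at hj ⊢
      rwa [Equiv.swap_apply_of_ne_of_ne hjn (fun h => by rw [h] at hj; simp at hj)] at hj
    have hinv :=
      card_inversions_mul_swap_le w (a := ⟨n, by omega⟩) (b := ⟨n + 1, by omega⟩) rfl
    have := (card_le_card hneg).trans (card_insert_le _ _)
    unfold signedInvCount
    omega

lemma signedInvCount_wordProd_le (l : List (Fin (n+1))) :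
    signedInvCount n (wordProd n l) ≤ 2 * l.length := by
  induction l using List.reverseRecOn with
  | nil => simp [wordProd, signedInvCount_one]
  | append_singleton l i ih =>
    rw [wordProd_concat, List.length_append, List.length_singleton]
    have := signedInvCount_mul_sgen_le (wordProd n l) i
    omega

lemma signedInvCount_le_two_mul_len {w : Equiv.Perm (Fin (2*n+2))} (hw : ∃ l, wordProd n l = w) :
    signedInvCount n w ≤ 2 * len n w := by
  obtain ⟨l, rfl, hl⟩ := exists_wordProd_eq_length_eq_len hw
  exact hl ▸ signedInvCount_wordProd_le l

end SignedInversions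

section ExtremalValues

variable {m : ℕ} {w : Equiv.Perm (Fin m)} {p p' : Fin m}

def extremalPairs (p p' : Fin m) : Finset (Fin m × Fin m) :=
  (Ioi p).image (p, ·) ∪ ((Iio p').erase p).image (·, p')

lemma card_extremalPairs (hpp' : p < p') : #(extremalPairs p p') = (m - 1 - p) + (p' - 1) := by
  rw [extremalPairs, card_union_of_disjoint, card_image_of_injective _ (Prod.mk_right_injective p),
    card_image_of_injective _ (Prod.mk_left_injective p'), card_erase_of_mem (mem_Iio.2 hpp'),
    Fin.card_Ioi, Fin.card_Iio]
  simp only [disjoint_left, mem_image, mem_erase]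
  rintro _ ⟨j, -, rfl⟩ ⟨i, ⟨hip, -⟩, hi⟩
  exact hip (congrArg Prod.fst hi)

lemma eq_or_eq_of_mem_extremalPairs {q : Fin m × Fin m} (hq : q ∈ extremalPairs p p') :
    q.1 = p ∨ q.2 = p' := by
  simp only [extremalPairs, mem_union, mem_image] at hq
  rcases hq with ⟨j, -, rfl⟩ | ⟨i, -, rfl⟩
  exacts [Or.inl rfl, Or.inr rfl]

lemma apply_lt_of_forall_apply_le {p j : Fin m} (hp : ∀ x, w x ≤ w p) (hjp : j ≠ p) :
    w j < w p :=
  (hp j).lt_of_ne (w.injective.ne hjp)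

lemma apply_gt_of_forall_le_apply {p' j : Fin m} (hp' : ∀ x, w p' ≤ w x) (hjp' : j ≠ p') :
    w p' < w j :=
  (hp' j).lt_of_ne (w.injective.ne hjp'.symm)

lemma extremalPairs_subset_inversions (hp : ∀ x, w x ≤ w p) (hp' : ∀ x, w p' ≤ w x) :
    extremalPairs p p' ⊆ inversions w := by
  rw [extremalPairs, union_subset_iff]
  simp only [subset_iff, mem_image, mem_Ioi, mem_erase, mem_Iio, inversions, mem_filter, mem_univ,
    true_and]
  constructor
  · rintro _ ⟨j, hpj, rfl⟩
    exact ⟨hpj, apply_lt_of_forall_apply_le hp hpj.ne'⟩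
  · rintro _ ⟨i, ⟨-, hip'⟩, rfl⟩
    exact ⟨hip', apply_gt_of_forall_le_apply hp' hip'.ne⟩

lemma val_apply_add_of_inversions_subset (hp : ∀ x, w x ≤ w p) (hp' : ∀ x, w p' ≤ w x)
    (hinv : inversions w ⊆ extremalPairs p p') {j : Fin m} (hjp : j ≠ p) (hjp' : j ≠ p') :
    (w j : ℕ) + (if p < j then 1 else 0) = j + (if j < p' then 1 else 0) := by
  have hrigid : ∀ i j, i < j → w j < w i → i = p ∨ j = p' := fun i j hij hw =>
    eq_or_eq_of_mem_extremalPairs (q := (i, j)) (hinv (by simp [inversions, hij, hw]))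
  have hlt : ∀ i, w i < w j ↔ (i < j ∧ i ≠ p) ∨ (i = p' ∧ j < p') := by
    intro i
    rcases lt_trichotomy i j with hij | rfl | hji
    · by_cases hip : i = p
      · subst hip
        simp only [(apply_lt_of_forall_apply_le hp hjp).le.not_gt, false_iff]
        rintro (⟨-, h⟩ | ⟨rfl, h⟩)
        exacts [h rfl, h.not_gt hij]
      · simp only [hij, ne_eq, hip, not_false_eq_true, and_self, true_or, iff_true]
        refine (le_of_not_gt fun h => ?_).lt_of_ne (w.injective.ne hij.ne)
        exact (hrigid i j hij h).elim hip hjp'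
    · simp [hjp']
    · by_cases hip' : i = p'
      · subst hip'
        simp [apply_gt_of_forall_le_apply hp' hjp', hji]
      · simp only [hji.not_gt, false_and, hip', or_self, iff_false, not_lt]
        exact le_of_not_gt fun h => (hrigid j i hji h).elim hjp hip'
  have hcount : #{i | w i < w j} = (w j : ℕ) := by
    rw [← Fin.card_Iio (w j)]
    exact card_equiv w (by simp)
  rw [← hcount]
  by_cases hjp'' : j < p'
  · have hset : ({i | w i < w j} : Finset (Fin m)) = insert p' ((Iio j).erase p) := by
      ext i
      simp [hlt, hjp'', and_comm, or_comm]
    rw [hset, card_insert_of_notMem (by simp [hjp''.not_gt]), card_erase_eq_ite, Fin.card_Iio]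
    simp only [mem_Iio, hjp'', if_true, Fin.lt_def]
    split_ifs <;> omega
  · have hset : ({i | w i < w j} : Finset (Fin m)) = (Iio j).erase p := by
      ext i
      simp [hlt, hjp'', and_comm]
    rw [hset, card_erase_eq_ite, Fin.card_Iio]
    simp only [mem_Iio, hjp'', if_false, Fin.lt_def]
    split_ifs <;> omega

end ExtremalValues

section LowerBound

variable {n : ℕ} {w : Equiv.Perm (Fin (2*n+2))} {p : Fin (2*n+2)}

lemma val_bar (i : Fin (2*n+2)) : (bar n i : ℕ) = 2*n+1 - i := rfl

lemma mem_negatives_of_val_eq_top (hp : (w p : ℕ) = 2*n+1) (hpn : (p : ℕ) ≤ n) :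
    p ∈ negatives n w := by
  simp only [negatives, mem_filter, mem_univ, true_and, hp]
  omega

lemma apply_le_of_val_eq_top (hp : (w p : ℕ) = 2*n+1) (x : Fin (2*n+2)) : w x ≤ w p := by
  rw [Fin.le_def, hp]
  exact Nat.le_of_lt_succ (w x).isLt

lemma val_apply_bar_of_val_eq_top (hw : IsSigned n w) (hp : (w p : ℕ) = 2*n+1) :
    (w (bar n p) : ℕ) = 0 := by
  rw [hw, val_bar, hp, Nat.sub_self]

lemma apply_bar_le_of_val_eq_top (hw : IsSigned n w) (hp : (w p : ℕ) = 2*n+1)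
    (x : Fin (2*n+2)) : w (bar n p) ≤ w x := by
  rw [Fin.le_def, val_apply_bar_of_val_eq_top hw hp]
  exact Nat.zero_le _

lemma lt_bar_of_le (hpn : (p : ℕ) ≤ n) : p < bar n p := by
  rw [Fin.lt_def, val_bar]
  omega

lemma card_extremalPairs_bar (hpn : (p : ℕ) ≤ n) :
    #(extremalPairs p (bar n p)) + 1 = 2 * (2*n+1 - p) := by
  rw [card_extremalPairs (lt_bar_of_le hpn), val_bar]
  omega

lemma two_mul_le_signedInvCount (hw : IsSigned n w) (hp : (w p : ℕ) = 2*n+1)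
    (hpn : (p : ℕ) ≤ n) : 2 * (2*n+1 - p) ≤ signedInvCount n w := by
  have hinv := card_le_card <|
    extremalPairs_subset_inversions (apply_le_of_val_eq_top hp) (apply_bar_le_of_val_eq_top hw hp)
  have := card_pos.2 ⟨p, mem_negatives_of_val_eq_top hp hpn⟩
  rw [← card_extremalPairs_bar hpn, signedInvCount]
  omega

lemma inversions_subset_of_signedInvCount_le (hw : IsSigned n w) (hp : (w p : ℕ) = 2*n+1)
    (hpn : (p : ℕ) ≤ n) (h : signedInvCount n w ≤ 2 * (2*n+1 - p)) :
    inversions w ⊆ extremalPairs p (bar n p) := by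
  have hsub := extremalPairs_subset_inversions (apply_le_of_val_eq_top hp)
    (apply_bar_le_of_val_eq_top hw hp)
  have := card_pos.2 ⟨p, mem_negatives_of_val_eq_top hp hpn⟩
  rw [← card_extremalPairs_bar hpn, signedInvCount] at h
  exact (eq_of_subset_of_card_le hsub (by omega)).ge

end LowerBound

section Representative

def ascWord (n t : ℕ) : List (Fin (n+1)) := (List.range t).map (Fin.ofNat (n+1))

def descWord (n d : ℕ) : List (Fin (n+1)) :=
  (List.range d).map (fun e => Fin.ofNat (n+1) (n - 1 - e))

/-- One-line notation of the representative with `0`-based positions and values: positions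
`0, …, k-1` carry `1, …, k-1, 2n+1`, the paper's `2, …, k, \overline 1`; the other values are
forced by signedness. -/
def cosetRepVal (n k x : ℕ) : ℕ :=
  if x < k-1 then x+1 else if x = k-1 then 2*n+1
  else if x ≤ 2*n+1-k then x else if x = 2*n+2-k then 0 else x-1

def cosetRep (n k : ℕ) : Equiv.Perm (Fin (2*n+2)) := s2t1 n * wordProd n (ascWord n (k-1))

variable {n k : ℕ}

lemma ascWord_succ (t : ℕ) : ascWord n (t+1) = ascWord n t ++ [Fin.ofNat (n+1) t] := by
  simp [ascWord, List.range_succ]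

lemma descWord_succ (d : ℕ) :
    descWord n (d+1) = descWord n d ++ [Fin.ofNat (n+1) (n - 1 - d)] := by
  simp [descWord, List.range_succ]

lemma val_wordProd_ascWord_apply {t : ℕ} (ht : t ≤ n) (x : Fin (2*n+2)) :
    (wordProd n (ascWord n t) x : ℕ) =
      if (x : ℕ) < t then (x : ℕ) + 1 else if (x : ℕ) = t then 0
      else if (x : ℕ) < 2*n+1-t then (x : ℕ) else if (x : ℕ) = 2*n+1-t then 2*n+1
      else (x : ℕ) - 1 := by
  induction t generalizing x with
  | zero =>
    simp only [ascWord, List.range_zero, List.map_nil, wordProd, List.prod_nil, one_apply]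
    have := x.isLt
    split_ifs <;> omega
  | succ t ih =>
    rw [ascWord_succ, wordProd_concat, mul_apply, ih (by omega), val_sgen_apply,
      Fin.val_ofNat, Nat.mod_eq_of_lt (by omega)]
    have := x.isLt
    split_ifs <;> omega

lemma val_cosetRep_apply (hk : 1 ≤ k) (hkn : k ≤ n+1) (x : Fin (2*n+2)) :
    (cosetRep n k x : ℕ) = cosetRepVal n k x := by
  have hy := val_wordProd_ascWord_apply (t := k-1) (by omega) x
  rw [cosetRep, mul_apply, s2t1, val_swap_mk_apply]
  generalize (wordProd n _ x : ℕ) = y at hy ⊢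
  have := x.isLt
  unfold cosetRepVal
  split_ifs at hy <;> subst hy <;> split_ifs <;> first | omega | contradiction

lemma cosetRep_eq_mul_sgen (hk : 1 ≤ k) :
    cosetRep n k = cosetRep n (k+1) * sgen n (Fin.ofNat (n+1) (k-1)) := by
  obtain ⟨j, rfl⟩ : ∃ j, k = j + 1 := ⟨k - 1, by omega⟩
  simp only [cosetRep, Nat.add_sub_cancel, ascWord_succ, wordProd_concat, mul_assoc, sgen_mul_self,
    mul_one]

lemma cosetRep_top : cosetRep n (n+1) = wordProd n (ascWord n (n+1)) := by
  ext x
  have hy := val_sgen_apply n (Fin.ofNat (n+1) n) x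
  rw [Fin.val_ofNat, Nat.mod_eq_of_lt (by omega)] at hy
  rw [val_cosetRep_apply (by omega) le_rfl, ascWord_succ, wordProd_concat, mul_apply,
    val_wordProd_ascWord_apply le_rfl]
  generalize (sgen n _ x : ℕ) = y at hy ⊢
  have := x.isLt
  unfold cosetRepVal
  split_ifs at hy <;> subst hy <;> split_ifs <;> omega

lemma cosetRep_eq_wordProd {d : ℕ} (hd : d ≤ n) :
    cosetRep n (n+1-d) = wordProd n (ascWord n (n+1) ++ descWord n d) := by
  induction d with
  | zero =>
    rw [Nat.sub_zero, descWord, List.range_zero, List.map_nil, List.append_nil, cosetRep_top]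
  | succ d ih =>
    rw [cosetRep_eq_mul_sgen (by omega), show n + 1 - (d+1) + 1 = n + 1 - d by omega,
      ih (by omega), descWord_succ, ← List.append_assoc, wordProd_concat,
      show n + 1 - (d+1) - 1 = n - 1 - d by omega]

lemma exists_wordProd_eq_cosetRep (hk : 1 ≤ k) (hkn : k ≤ n+1) :
    ∃ l, wordProd n l = cosetRep n k ∧ l.length = 2*n+2-k := by
  refine ⟨_, (Nat.sub_sub_self hkn ▸ cosetRep_eq_wordProd (by omega)).symm, ?_⟩
  simp only [List.length_append, ascWord, descWord, List.length_map, List.length_range]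
  omega

lemma inv_s2t1_mul_cosetRep_mem (hkn : k ≤ n+1) : (s2t1 n)⁻¹ * cosetRep n k ∈ WP n k := by
  rw [cosetRep, inv_mul_cancel_left]
  refine wordProd_mem_WP fun i hi => ?_
  obtain ⟨t, ht, rfl⟩ := List.mem_map.1 hi
  rw [List.mem_range] at ht
  rw [Fin.val_ofNat, Nat.mod_eq_of_lt (by omega)]
  omega

lemma exists_wordProd_eq_s2t1 : ∃ l, wordProd n l = s2t1 n := by
  obtain ⟨l, hl, -⟩ := exists_wordProd_eq_cosetRep (n := n) le_rfl (by omega)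
  exact ⟨l, by rw [hl, cosetRep, Nat.sub_self, ascWord, List.range_zero, List.map_nil, wordProd,
    List.map_nil, List.prod_nil, mul_one]⟩

end Representative

section Coset

variable {n k : ℕ} {w : Equiv.Perm (Fin (2*n+2))}

lemma isSigned_of_mem_coset (hw : (s2t1 n)⁻¹ * w ∈ WP n k) : IsSigned n w := by
  simpa using (signedPerms n).mul_mem (isSigned_s2t1 n) (WP_le_signedPerms n k hw)

lemma inv_mul_mem_WP_of_mem_coset {v : Equiv.Perm (Fin (2*n+2))} (hv : (s2t1 n)⁻¹ * v ∈ WP n k)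
    (hw : (s2t1 n)⁻¹ * w ∈ WP n k) : v⁻¹ * w ∈ WP n k :=
  QuotientGroup.eq.1 ((QuotientGroup.eq.2 hv).symm.trans (QuotientGroup.eq.2 hw))

lemma exists_wordProd_eq_of_mem_coset (hw : (s2t1 n)⁻¹ * w ∈ WP n k) :
    ∃ l, wordProd n l = w := by
  obtain ⟨l, hl⟩ := exists_wordProd_eq_s2t1 (n := n)
  obtain ⟨l', hl'⟩ := exists_wordProd_eq_of_mem_WP hw
  exact ⟨l ++ l', by rw [wordProd_append, hl, hl', mul_inv_cancel_left]⟩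

lemma exists_val_eq_top_of_mem_coset (hk : 1 ≤ k) (hkn : k ≤ n+1)
    (hw : (s2t1 n)⁻¹ * w ∈ WP n k) :
    ∃ p : Fin (2*n+2), (w p : ℕ) = 2*n+1 ∧ (p : ℕ) < k := by
  refine ⟨w⁻¹ ⟨2*n+1, by omega⟩, by simp, ?_⟩
  have := WP_le_lowBlockStabilizer hkn hw (w⁻¹ ⟨2*n+1, by omega⟩)
  simp only [mul_apply, coe_inv, Equiv.apply_symm_apply, s2t1, Equiv.symm_swap,
    Equiv.swap_apply_right] at this
  exact this.1 hk

lemma le_len_of_mem_coset (hk : 1 ≤ k) (hkn : k ≤ n+1) (hw : (s2t1 n)⁻¹ * w ∈ WP n k) :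
    2*n+2-k ≤ len n w := by
  obtain ⟨p, hp, hpk⟩ := exists_val_eq_top_of_mem_coset hk hkn hw
  have := two_mul_le_signedInvCount (isSigned_of_mem_coset hw) hp (by omega)
  have := signedInvCount_le_two_mul_len (exists_wordProd_eq_of_mem_coset hw)
  omega

lemma eq_cosetRep_of_len_le (hk : 1 ≤ k) (hkn : k ≤ n+1) (hw : (s2t1 n)⁻¹ * w ∈ WP n k)
    (hlen : len n w ≤ 2*n+2-k) : w = cosetRep n k := by
  obtain ⟨p, hp, hpk⟩ := exists_val_eq_top_of_mem_coset hk hkn hw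
  have hsigned := isSigned_of_mem_coset hw
  have hlower := two_mul_le_signedInvCount hsigned hp (by omega)
  have hupper := signedInvCount_le_two_mul_len (exists_wordProd_eq_of_mem_coset hw)
  have hpk' : (p : ℕ) = k - 1 := by omega
  have hinv := inversions_subset_of_signedInvCount_le hsigned hp (by omega) (by omega)
  ext x
  rw [val_cosetRep_apply hk hkn, cosetRepVal]
  by_cases hxp : x = p
  · subst hxp
    split_ifs <;> omega
  by_cases hxp' : x = bar n p
  · subst hxp'
    rw [val_apply_bar_of_val_eq_top hsigned hp, val_bar]
    split_ifs <;> omega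
  have := val_apply_add_of_inversions_subset (apply_le_of_val_eq_top hp)
    (apply_bar_le_of_val_eq_top hsigned hp) hinv hxp hxp'
  have := Fin.val_ne_of_ne hxp
  have := Fin.val_ne_of_ne hxp'
  simp only [Fin.lt_def, val_bar] at *
  split_ifs at * <;> omega

end Coset

/-- The minimal length representative of the coset `z_1 W_{P_k} = s_{2t_1} W_{P_k}` in the
Weyl group of type `C_{n+1}` (`1 < k ≤ n+1`) is the sequence `(2 < 3 < ⋯ < k < \overline 1)`
(i.e. value `j+1` in position `j` for `j < k`, and value `\overline 1 = 2n+2` in position `k`),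
and its length equals `2n+2-k`. -/
theorem stmt4 (n k : ℕ) (hk : 2 ≤ k) (hkn : k ≤ n+1) :
    ∃ z : Equiv.Perm (Fin (2*n+2)), IsSigned n z ∧ (s2t1 n)⁻¹ * z ∈ WP n k ∧
      IsMinRep n k z ∧
      (∀ j : ℕ, ∀ _hj : j + 1 < k, (z ⟨j, by omega⟩ : ℕ) = j + 1) ∧
      (z ⟨k-1, by omega⟩ : ℕ) = 2*n+1 ∧
      len n z = 2*n+2-k ∧
      ∀ z' : Equiv.Perm (Fin (2*n+2)), IsSigned n z' → (s2t1 n)⁻¹ * z' ∈ WP n k →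
        IsMinRep n k z' → z' = z := by
  have hk₁ : 1 ≤ k := by omega
  have hmem := inv_s2t1_mul_cosetRep_mem (n := n) hkn
  have hlen : len n (cosetRep n k) = 2*n+2-k := by
    obtain ⟨l, hl, hlength⟩ := exists_wordProd_eq_cosetRep hk₁ hkn
    exact le_antisymm (hl ▸ hlength ▸ len_wordProd_le l) (le_len_of_mem_coset hk₁ hkn hmem)
  refine ⟨cosetRep n k, isSigned_of_mem_coset hmem, hmem, fun q hq => ?_, fun j hj => ?_, ?_,
    hlen, fun z' _ hz' hmin => ?_⟩
  · rw [hlen]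
    exact le_len_of_mem_coset hk₁ hkn (by rw [← mul_assoc]; exact mul_mem hmem hq)
  · rw [val_cosetRep_apply hk₁ hkn, cosetRepVal, Fin.val_mk, if_pos (by omega)]
  · rw [val_cosetRep_apply hk₁ hkn, cosetRepVal, Fin.val_mk, if_neg (by omega), if_pos rfl]
  · refine eq_cosetRep_of_len_le hk₁ hkn hz' ?_
    simpa [hlen] using hmin _ (inv_mul_mem_WP_of_mem_coset hz' hmem)
end

section
/- Fix integers 1 ≤ k ≤ n+1. There is a bijection between the set Λ^{2n+2}_k of (n+1-k)-strict partitions λ = (λ_1 ≥ ⋯ ≥ λ_k) with 2n+2-k ≥ λ_1 and λ_k ≥ 0, and the set W^{P_k} of minimal length representatives (identified with increasing k-subsets of {1,...,2n+2} avoiding pairs {i, 2n+3-i}), given by λ ↦ w with w(j) = 2n+3-k-λ_j + #{i < j : λ_i + λ_j ≤ 2(n+1-k) + j - i}, with inverse w ↦ λ given by λ_j = 2n+3-k-w(j) + #{i < j : w(i)+w(j) > 2n+3}. -/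
/-- `Λ^{2n+2}_k`: `(n+1-k)`-strict partitions `2n+2-k ≥ λ_1 ≥ ⋯ ≥ λ_k ≥ 0`. -/
def IsEvenPart (n k : ℕ) (lam : Fin k → ℤ) : Prop :=
  (∀ j, 0 ≤ lam j) ∧ (∀ j, lam j ≤ (2*n+2 : ℤ) - k) ∧
  (∀ i j : Fin k, i ≤ j → lam j ≤ lam i) ∧
  (∀ j : Fin k, ∀ h : (j : ℕ) + 1 < k, (n : ℤ) + 1 - k < lam j → lam ⟨(j : ℕ)+1, h⟩ < lam j)

/-- Increasing `k`-element sequences in `{1,...,2n+2}` avoiding pairs `{i, 2n+3-i}`,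
identifying the minimal length representatives `W^{P_k}` of type `C_{n+1}`. -/
def IsIncSeq (n k : ℕ) (w : Fin k → ℤ) : Prop :=
  StrictMono w ∧ (∀ j, 1 ≤ w j) ∧ (∀ j, w j ≤ (2*n+2 : ℤ)) ∧
  (∀ i j : Fin k, w i + w j ≠ (2*n+3 : ℤ))

/-- `λ ↦ w`:  `w(j) = 2n+3-k-λ_j + #{i < j : λ_i + λ_j ≤ 2(n+1-k) + j - i}`. -/
def toSeq (n k : ℕ) (lam : Fin k → ℤ) (j : Fin k) : ℤ :=
  (2*n+3 : ℤ) - k - lam j +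
    (Finset.univ.filter (fun i : Fin k => i < j ∧
      lam i + lam j ≤ 2*((n : ℤ)+1-k) + ((j : ℕ) : ℤ) - ((i : ℕ) : ℤ))).card

/-- `w ↦ λ`:  `λ_j = 2n+3-k-w(j) + #{i < j : w(i)+w(j) > 2n+3}`. -/
def toPart (n k : ℕ) (w : Fin k → ℤ) (j : Fin k) : ℤ :=
  (2*n+3 : ℤ) - k - w j +
    (Finset.univ.filter (fun i : Fin k => i < j ∧ w i + w j > (2*n+3 : ℤ))).card

/-! For `i < j`, the sum `w i + w j` of two entries of `w = toSeq λ` is never `2n+3`, and exceeds it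
exactly when `λ i + λ j ≤ 2(n+1-k) + j - i`: parts larger than `n+1-k` are strictly decreasing,
which pins down the sizes of the counting sets in `toSeq`. So the set counted by `toPart` at `w` is
the set counted by `toSeq` at `λ`, and `toPart ∘ toSeq = id`.

Conversely, `toPart w j = 2n+3-k - w j + #{i < j : w i > 2n+3 - w j}` depends only on `w j` and the
earlier entries, and strictly decreases in `w j` over the values that are not paired with an earlier
entry. Hence `toPart` is injective on increasing sequences, which with `toPart ∘ toSeq = id` gives
`toSeq ∘ toPart = id`. -/

open Finset

lemma Fin.add_sub_le_of_lt_succ {k : ℕ} {f : Fin k → ℤ} {i j : Fin k} (hij : i ≤ j)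
    (h : ∀ (l : Fin k) (hl : (l : ℕ) + 1 < k), i ≤ l → l < j → f l < f ⟨l + 1, hl⟩) :
    f i + (((j : ℕ) : ℤ) - ((i : ℕ) : ℤ)) ≤ f j := by
  obtain ⟨i, hi⟩ := i
  obtain ⟨j, hj⟩ := j
  simp only [Fin.mk_le_mk] at hij
  induction j, hij using Nat.le_induction with
  | base => simp
  | succ j hij ih =>
    have hprev := ih (by omega) fun l hl hil hlj => h l hl hil (hlj.trans (Fin.lt_def.2 (by simp)))
    have hstep := h ⟨j, by omega⟩ hj (by simpa using hij) (by simp [Fin.lt_def])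
    push_cast at hprev ⊢
    linarith

lemma Fin.strictMono_of_lt_add_one {k : ℕ} {α : Type*} [Preorder α] {f : Fin k → α}
    (h : ∀ (j : Fin k) (hj : (j : ℕ) + 1 < k), f j < f ⟨j + 1, hj⟩) : StrictMono f := by
  cases k with
  | zero => exact fun i => i.elim0
  | succ k => exact Fin.strictMono_iff_lt_succ.2 fun i => h i.castSucc (by simp)

lemma Fin.antitone_of_add_one_le {k : ℕ} {α : Type*} [Preorder α] {f : Fin k → α}
    (h : ∀ (j : Fin k) (hj : (j : ℕ) + 1 < k), f ⟨j + 1, hj⟩ ≤ f j) : Antitone f := by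
  cases k with
  | zero => exact fun i => i.elim0
  | succ k => exact Fin.antitone_iff_succ_le.2 fun i => h i.castSucc (by simp)

lemma Finset.card_le_of_injOn_Icc {α : Type*} {s : Finset α} {f : α → ℤ} {a b : ℤ}
    (hf : ∀ x ∈ s, f x ∈ Icc a b) (hinj : Set.InjOn f s) : (#s : ℤ) ≤ (b + 1 - a).toNat := by
  have := card_le_card_of_injOn f hf hinj
  rw [Int.card_Icc] at this
  exact_mod_cast this

section Partition

variable {n k : ℕ} {lam : Fin k → ℤ} {i j : Fin k}

def toSeqSet (n k : ℕ) (lam : Fin k → ℤ) (j : Fin k) : Finset (Fin k) :=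
  univ.filter fun i : Fin k => i < j ∧
    lam i + lam j ≤ 2*((n : ℤ)+1-k) + ((j : ℕ) : ℤ) - ((i : ℕ) : ℤ)

lemma toSeq_eq : toSeq n k lam j = (2*n+3 : ℤ) - k - lam j + #(toSeqSet n k lam j) := rfl

lemma mem_toSeqSet : i ∈ toSeqSet n k lam j ↔
    i < j ∧ lam i + lam j ≤ 2*((n : ℤ)+1-k) + ((j : ℕ) : ℤ) - ((i : ℕ) : ℤ) := by
  simp [toSeqSet]

lemma card_toSeqSet_le (j : Fin k) : #(toSeqSet n k lam j) ≤ j := by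
  simpa using card_le_card fun i hi => mem_Iio.2 (mem_toSeqSet.1 hi).1

lemma IsEvenPart.add_sub_le (hl : IsEvenPart n k lam) (hij : i ≤ j)
    (hj : (n : ℤ) + 1 - k < lam j) : lam j + (((j : ℕ) : ℤ) - ((i : ℕ) : ℤ)) ≤ lam i := by
  obtain ⟨-, -, hanti, hstrict⟩ := hl
  have := Fin.add_sub_le_of_lt_succ (f := fun l => -lam l) hij fun l hl _ hlj =>
    neg_lt_neg (hstrict l hl (hj.trans_le (hanti l j hlj.le)))
  linarith

lemma IsEvenPart.toSeqSet_eq_empty (hl : IsEvenPart n k lam) (hj : (n : ℤ) + 1 - k < lam j) :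
    toSeqSet n k lam j = ∅ := by
  refine eq_empty_of_forall_notMem fun i hi => ?_
  obtain ⟨hij, hc⟩ := mem_toSeqSet.1 hi
  have := hl.add_sub_le hij.le hj
  linarith

lemma IsEvenPart.sub_le_card_toSeqSet (hl : IsEvenPart n k lam) (hij : i < j)
    (hc : lam i + lam j ≤ 2*((n : ℤ)+1-k) + ((j : ℕ) : ℤ) - ((i : ℕ) : ℤ)) :
    ((j : ℕ) : ℤ) - ((i : ℕ) : ℤ) ≤ #(toSeqSet n k lam j) := by
  have hsub : Ico i j ⊆ toSeqSet n k lam j := by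
    intro l hl'
    obtain ⟨hil, hlj⟩ := mem_Ico.1 hl'
    refine mem_toSeqSet.2 ⟨hlj, ?_⟩
    have hjl := hl.2.2.1 l j hlj.le
    have : ((l : ℕ) : ℤ) < (j : ℕ) := by exact_mod_cast hlj
    rcases le_or_gt (lam l) ((n : ℤ) + 1 - k) with hsmall | hbig
    · linarith
    · have := hl.add_sub_le hil hbig
      linarith
  have := card_le_card hsub
  rw [Fin.card_Ico] at this
  have : (i : ℕ) < j := hij
  omega

lemma IsEvenPart.card_toSeqSet_lt (hl : IsEvenPart n k lam) (hij : i < j)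
    (hi : (n : ℤ) + 1 - k < lam i)
    (hc : 2*((n : ℤ)+1-k) + ((j : ℕ) : ℤ) - ((i : ℕ) : ℤ) < lam i + lam j) :
    (#(toSeqSet n k lam j) : ℤ) < ((j : ℕ) : ℤ) - ((i : ℕ) : ℤ) := by
  have hsub : toSeqSet n k lam j ⊆ Ioo i j := by
    intro l hl'
    obtain ⟨hlj, hcl⟩ := mem_toSeqSet.1 hl'
    refine mem_Ioo.2 ⟨lt_of_not_ge fun hli => ?_, hlj⟩
    have := hl.add_sub_le hli hi
    linarith
  have := card_le_card hsub
  rw [Fin.card_Ioo] at this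
  have : (i : ℕ) < j := hij
  omega

lemma IsEvenPart.lt_toSeq_add_toSeq (hl : IsEvenPart n k lam) (hij : i < j)
    (hc : lam i + lam j ≤ 2*((n : ℤ)+1-k) + ((j : ℕ) : ℤ) - ((i : ℕ) : ℤ)) :
    (2*n+3 : ℤ) < toSeq n k lam i + toSeq n k lam j := by
  have := hl.sub_le_card_toSeqSet hij hc
  rw [toSeq_eq, toSeq_eq]
  omega

lemma IsEvenPart.toSeq_add_toSeq_lt (hl : IsEvenPart n k lam) (hij : i < j)
    (hc : 2*((n : ℤ)+1-k) + ((j : ℕ) : ℤ) - ((i : ℕ) : ℤ) < lam i + lam j) :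
    toSeq n k lam i + toSeq n k lam j < (2*n+3 : ℤ) := by
  have hji := hl.2.2.1 i j hij.le
  have hi : (n : ℤ) + 1 - k < lam i := by
    by_contra! hi
    have : ((i : ℕ) : ℤ) < (j : ℕ) := by exact_mod_cast hij
    linarith
  have := hl.card_toSeqSet_lt hij hi hc
  rw [toSeq_eq, toSeq_eq, hl.toSeqSet_eq_empty hi]
  simp only [card_empty, Nat.cast_zero]
  linarith

lemma IsEvenPart.toSeq_add_toSeq_ne (hl : IsEvenPart n k lam) (i j : Fin k) :
    toSeq n k lam i + toSeq n k lam j ≠ (2*n+3 : ℤ) := by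
  wlog hij : i ≤ j generalizing i j
  · rw [add_comm]; exact this j i (le_of_not_ge hij)
  rcases hij.lt_or_eq with hij | rfl
  · rcases le_or_gt (lam i + lam j) (2*((n : ℤ)+1-k) + ((j : ℕ) : ℤ) - ((i : ℕ) : ℤ)) with hc | hc
    · exact (hl.lt_toSeq_add_toSeq hij hc).ne'
    · exact (hl.toSeq_add_toSeq_lt hij hc).ne
  · rw [toSeq_eq]
    omega

lemma IsEvenPart.toSeq_strictMono (hl : IsEvenPart n k lam) : StrictMono (toSeq n k lam) := by
  refine Fin.strictMono_of_lt_add_one fun j hj => ?_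
  set j' : Fin k := ⟨j + 1, hj⟩
  have hjj' : j < j' := Fin.lt_def.2 (Nat.lt_succ_self _)
  have hlam : lam j' ≤ lam j := hl.2.2.1 j j' hjj'.le
  have hsub : toSeqSet n k lam j ⊆ toSeqSet n k lam j' := fun i hi => by
    obtain ⟨hij, hc⟩ := mem_toSeqSet.1 hi
    refine mem_toSeqSet.2 ⟨hij.trans hjj', ?_⟩
    simp only [j']
    push_cast
    linarith
  rw [toSeq_eq, toSeq_eq]
  rcases hlam.lt_or_eq with hlt | heq
  · have := card_le_card hsub
    omega
  · -- equal consecutive parts are small, so `j` itself is counted at `j + 1`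
    have hsmall : lam j ≤ (n : ℤ) + 1 - k := not_lt.1 fun hbig => (hl.2.2.2 j hj hbig).ne heq
    have hj_mem : j ∈ toSeqSet n k lam j' :=
      mem_toSeqSet.2 ⟨hjj', by simp only [j']; push_cast; linarith⟩
    have hj_not : j ∉ toSeqSet n k lam j := fun h => lt_irrefl j (mem_toSeqSet.1 h).1
    have := card_le_card (insert_subset hj_mem hsub)
    rw [card_insert_of_notMem hj_not] at this
    omega

lemma IsEvenPart.isIncSeq_toSeq (hl : IsEvenPart n k lam) : IsIncSeq n k (toSeq n k lam) := by
  refine ⟨hl.toSeq_strictMono, fun j => ?_, fun j => ?_, hl.toSeq_add_toSeq_ne⟩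
  · have := hl.2.1 j
    rw [toSeq_eq]
    omega
  · have := hl.1 j
    have := card_toSeqSet_le (n := n) (lam := lam) j
    have := j.isLt
    rw [toSeq_eq]
    omega

lemma IsEvenPart.toPart_toSeq (hl : IsEvenPart n k lam) : toPart n k (toSeq n k lam) = lam := by
  funext j
  have hset : univ.filter (fun i : Fin k => i < j ∧
      toSeq n k lam i + toSeq n k lam j > (2*n+3 : ℤ)) = toSeqSet n k lam j :=
    filter_congr fun i _ => and_congr_right fun hij =>
      ⟨fun h => not_lt.1 fun hc => (hl.toSeq_add_toSeq_lt hij hc).not_gt h,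
        hl.lt_toSeq_add_toSeq hij⟩
  rw [toPart, hset, toSeq_eq]
  ring

end Partition

section IncreasingSequence

variable {n k : ℕ} {w : Fin k → ℤ} {i j : Fin k}

def toPartSet (n k : ℕ) (w : Fin k → ℤ) (j : Fin k) (x : ℤ) : Finset (Fin k) :=
  univ.filter fun i : Fin k => i < j ∧ w i + x > (2*n+3 : ℤ)

lemma toPart_eq : toPart n k w j = (2*n+3 : ℤ) - k - w j + #(toPartSet n k w j (w j)) := rfl

lemma mem_toPartSet {x : ℤ} : i ∈ toPartSet n k w j x ↔ i < j ∧ (2*n+3 : ℤ) < w i + x := by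
  simp [toPartSet]

lemma card_toPartSet_le (j : Fin k) (x : ℤ) : #(toPartSet n k w j x) ≤ j := by
  simpa using card_le_card fun i hi => mem_Iio.2 (mem_toPartSet.1 hi).1

lemma card_toPartSet_le_of_le (hw : Function.Injective w) {x b : ℤ} (hb : ∀ i < j, w i ≤ b) :
    (#(toPartSet n k w j x) : ℤ) ≤ (b + x - (2*n+3)).toNat := by
  have := card_le_of_injOn_Icc (s := toPartSet n k w j x) (a := 2*n+4 - x) (b := b)
    (fun i hi => by
      obtain ⟨hij, hi⟩ := mem_toPartSet.1 hi
      exact mem_Icc.2 ⟨by omega, hb i hij⟩) hw.injOn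
  rwa [show b + 1 - (2*n+4 - x) = b + x - (2*n+3) by ring] at this

lemma card_toPartSet_sub_card_lt (hw : Function.Injective w) {x y : ℤ} (hxy : x < y)
    (hx : ∀ i < j, w i + x ≠ (2*n+3 : ℤ)) :
    (#(toPartSet n k w j y) : ℤ) - #(toPartSet n k w j x) < y - x := by
  have hsub : toPartSet n k w j x ⊆ toPartSet n k w j y := fun i hi => by
    obtain ⟨hij, hi⟩ := mem_toPartSet.1 hi
    exact mem_toPartSet.2 ⟨hij, by omega⟩
  have hdiff := card_le_of_injOn_Icc (s := toPartSet n k w j y \ toPartSet n k w j x)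
    (a := 2*n+4 - y) (b := 2*n+2 - x) (fun i hi => by
      obtain ⟨hiy, hix⟩ := mem_sdiff.1 hi
      obtain ⟨hij, hi⟩ := mem_toPartSet.1 hiy
      have := hx i hij
      have : ¬ (2*n+3 : ℤ) < w i + x := fun h => hix (mem_toPartSet.2 ⟨hij, h⟩)
      exact mem_Icc.2 ⟨by omega, by omega⟩) hw.injOn
  rw [card_sdiff_of_subset hsub, Nat.cast_sub (card_le_card hsub)] at hdiff
  omega

lemma card_toPartSet_succ_le (j : Fin k) (hj : (j : ℕ) + 1 < k) (x : ℤ) :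
    #(toPartSet n k w ⟨j + 1, hj⟩ x) ≤ #(toPartSet n k w j x) + 1 := by
  refine (card_le_card fun i hi => ?_).trans (card_insert_le j _)
  obtain ⟨hij, hi⟩ := mem_toPartSet.1 hi
  rcases Nat.lt_succ_iff_lt_or_eq.1 (Fin.lt_def.1 hij) with hlt | heq
  · exact mem_insert_of_mem (mem_toPartSet.2 ⟨hlt, hi⟩)
  · exact mem_insert.2 (Or.inl (Fin.ext heq))

lemma IsIncSeq.add_sub_le (hw : IsIncSeq n k w) (hij : i ≤ j) :
    w i + (((j : ℕ) : ℤ) - ((i : ℕ) : ℤ)) ≤ w j :=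
  Fin.add_sub_le_of_lt_succ hij fun _ _ _ _ => hw.1 (Fin.lt_def.2 (Nat.lt_succ_self _))

/-- Each pair `{s, 2n+3-s}` inside `(2n+3-w j, w j)` contains at most one value `w i`. -/
lemma IsIncSeq.card_toPartSet_self_le (hw : IsIncSeq n k w) (j : Fin k) :
    (#(toPartSet n k w j (w j)) : ℤ) ≤ (w j - n - 2).toNat := by
  obtain ⟨hmono, -, -, hpair⟩ := hw
  have := card_le_of_injOn_Icc (s := toPartSet n k w j (w j))
    (f := fun i => min (w i) (2*n+3 - w i)) (a := 2*n+4 - w j) (b := n + 1)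
    (fun i hi => by
      obtain ⟨hij, hi⟩ := mem_toPartSet.1 hi
      have := hmono hij
      exact mem_Icc.2 ⟨le_min (by omega) (by omega), by omega⟩)
    (fun x _ y _ hxy => by
      have := hpair x y
      have : w x = w y := by simp only at hxy; omega
      exact hmono.injective this)
  rwa [show (n : ℤ) + 1 + 1 - (2*n+4 - w j) = w j - n - 2 by ring] at this

lemma IsIncSeq.toPart_nonneg (hw : IsIncSeq n k w) (j : Fin k) : 0 ≤ toPart n k w j := by
  obtain ⟨hmono, hpos, hle, hpair⟩ := hw
  rw [toPart_eq]
  set D := toPartSet n k w j (w j)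
  have hD : D ⊆ Iio j := fun i hi => mem_Iio.2 (mem_toPartSet.1 hi).1
  have hdisj : Disjoint (Iio j \ D) (Ioi j) :=
    disjoint_left.2 fun i hi hi' => lt_asymm (mem_Iio.1 (mem_sdiff.1 hi).1) (mem_Ioi.1 hi')
  -- earlier indices below the pairing threshold are sent to their partners, later ones to
  -- themselves: all land injectively in `(w j, 2n+2]`
  have hcard := card_le_of_injOn_Icc (s := (Iio j \ D) ∪ Ioi j)
    (f := fun i => if i < j then 2*n+3 - w i else w i) (a := w j + 1) (b := 2*n+2)
    (fun i hi => by
      rcases mem_union.1 hi with hi | hi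
      · obtain ⟨hij, hiD⟩ := mem_sdiff.1 hi
        have hij := mem_Iio.1 hij
        have : ¬ (2*n+3 : ℤ) < w i + w j := fun h => hiD (mem_toPartSet.2 ⟨hij, h⟩)
        have := hpair i j
        have := hpos i
        rw [if_pos hij]
        exact mem_Icc.2 ⟨by omega, by omega⟩
      · have hji := mem_Ioi.1 hi
        rw [if_neg (lt_asymm hji)]
        exact mem_Icc.2 ⟨by have := hmono hji; omega, hle i⟩)
    (fun x hx y hy hxy => by
      have hx' : x < j ∨ j < x := by
        rcases mem_union.1 hx with hx | hx
        exacts [Or.inl (mem_Iio.1 (mem_sdiff.1 hx).1), Or.inr (mem_Ioi.1 hx)]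
      have hy' : y < j ∨ j < y := by
        rcases mem_union.1 hy with hy | hy
        exacts [Or.inl (mem_Iio.1 (mem_sdiff.1 hy).1), Or.inr (mem_Ioi.1 hy)]
      have := hpair x y
      refine hmono.injective ?_
      rcases hx' with hx' | hx' <;> rcases hy' with hy' | hy'
      all_goals simp only [if_pos, if_neg, hx', hy', lt_asymm, not_false_eq_true] at hxy
      all_goals omega)
  rw [card_union_of_disjoint hdisj, card_sdiff_of_subset hD, Fin.card_Iio, Fin.card_Ioi] at hcard
  have := card_le_card hD
  rw [Fin.card_Iio] at this
  have := j.isLt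
  have := hle j
  omega

lemma IsIncSeq.toPart_le (hw : IsIncSeq n k w) (j : Fin k) : toPart n k w j ≤ (2*n+2 : ℤ) - k := by
  have h0 : 0 < k := j.pos
  have := hw.add_sub_le ((Fin.le_def.2 (Nat.zero_le _) : (⟨0, h0⟩ : Fin k) ≤ j))
  have := hw.2.1 ⟨0, h0⟩
  have := card_toPartSet_le (n := n) (w := w) j (w j)
  rw [toPart_eq]
  push_cast at *
  omega

lemma IsIncSeq.toPart_succ_le (hw : IsIncSeq n k w) (j : Fin k) (hj : (j : ℕ) + 1 < k) :
    toPart n k w ⟨j + 1, hj⟩ ≤ toPart n k w j := by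
  have hlt : w j < w ⟨j + 1, hj⟩ := hw.1 (Fin.lt_def.2 (Nat.lt_succ_self _))
  have := card_toPartSet_succ_le (n := n) (w := w) j hj (w ⟨j + 1, hj⟩)
  have := card_toPartSet_sub_card_lt (j := j) hw.1.injective hlt fun i _ => hw.2.2.2 i j
  rw [toPart_eq, toPart_eq]
  omega

lemma IsIncSeq.toPart_succ_lt (hw : IsIncSeq n k w) (j : Fin k) (hj : (j : ℕ) + 1 < k)
    (hbig : (n : ℤ) + 1 - k < toPart n k w j) :
    toPart n k w ⟨j + 1, hj⟩ < toPart n k w j := by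
  rw [toPart_eq] at hbig
  have hwj : w j ≤ n + 1 := by
    have := hw.card_toPartSet_self_le j
    omega
  obtain ⟨hmono, -, -, -⟩ := hw
  have hlt : w j < w ⟨j + 1, hj⟩ := hmono (Fin.lt_def.2 (Nat.lt_succ_self _))
  have := card_toPartSet_le_of_le (n := n) (j := j) (x := w j) (b := w j - 1) hmono.injective
    fun i hij => by have := hmono hij; omega
  have := card_toPartSet_le_of_le (n := n) (j := ⟨j + 1, hj⟩) (x := w ⟨j + 1, hj⟩) (b := w j)
    hmono.injective
    fun i hij => hmono.monotone (Fin.le_def.2 (Nat.lt_succ_iff.1 (Fin.lt_def.1 hij)))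
  rw [toPart_eq, toPart_eq]
  omega

lemma IsIncSeq.isEvenPart_toPart (hw : IsIncSeq n k w) : IsEvenPart n k (toPart n k w) :=
  ⟨hw.toPart_nonneg, hw.toPart_le, fun _ _ h => Fin.antitone_of_add_one_le hw.toPart_succ_le h,
    hw.toPart_succ_lt⟩

lemma IsIncSeq.eq_of_toPart_eq {w' : Fin k → ℤ} (hw : IsIncSeq n k w) (hw' : IsIncSeq n k w')
    (h : toPart n k w = toPart n k w') : w = w' := by
  funext j
  induction j using WellFoundedLT.induction with
  | _ j ih =>
  have hset : ∀ x, toPartSet n k w' j x = toPartSet n k w j x := fun x =>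
    filter_congr fun i _ => and_congr_right fun hij => by rw [ih i hij]
  have hj := congrFun h j
  rw [toPart_eq, toPart_eq, hset] at hj
  rcases lt_trichotomy (w j) (w' j) with hlt | heq | hgt
  · have := card_toPartSet_sub_card_lt (j := j) hw.1.injective hlt fun i _ => hw.2.2.2 i j
    omega
  · exact heq
  · have := card_toPartSet_sub_card_lt (j := j) hw.1.injective hgt fun i hij => by
      rw [ih i hij]; exact hw'.2.2.2 i j
    omega

lemma IsIncSeq.toSeq_toPart (hw : IsIncSeq n k w) : toSeq n k (toPart n k w) = w :=
  hw.isEvenPart_toPart.isIncSeq_toSeq.eq_of_toPart_eq hw hw.isEvenPart_toPart.toPart_toSeq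

end IncreasingSequence

theorem stmt6_general (n k : ℕ) :
    (∀ lam, IsEvenPart n k lam → IsIncSeq n k (toSeq n k lam)) ∧
    (∀ w, IsIncSeq n k w → IsEvenPart n k (toPart n k w)) ∧
    (∀ lam, IsEvenPart n k lam → toPart n k (toSeq n k lam) = lam) ∧
    (∀ w, IsIncSeq n k w → toSeq n k (toPart n k w) = w) :=
  ⟨fun _ hl => hl.isIncSeq_toSeq, fun _ hw => hw.isEvenPart_toPart,
    fun _ hl => hl.toPart_toSeq, fun _ hw => hw.toSeq_toPart⟩

/-- The maps `toSeq` and `toPart` are mutually inverse bijections between the set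
`Λ^{2n+2}_k` of `(n+1-k)`-strict partitions and the set of increasing `k`-element
sequences representing `W^{P_k}`. -/
theorem stmt6 (n k : ℕ) (hk : 1 ≤ k) (hkn : k ≤ n+1) :
    (∀ lam, IsEvenPart n k lam → IsIncSeq n k (toSeq n k lam)) ∧
    (∀ w, IsIncSeq n k w → IsEvenPart n k (toPart n k w)) ∧
    (∀ lam, IsEvenPart n k lam → toPart n k (toSeq n k lam) = lam) ∧
    (∀ w, IsIncSeq n k w → toSeq n k (toPart n k w) = w) :=
  stmt6_general n k
end

section
/- In the Weyl group of type C_{n+1} with P = P_k (1 ≤ k ≤ n+1), the degrees of the edges at the identity coset in the moment graph of IG(k,2n+2) are: the edge to w = s_{t_i+t_j}W_P with 1 ≤ i < j ≤ k has degree 2 (i.e., (t_i+t_j)^∨ ≡ 2α_k^∨ mod Δ_P^∨), while edges corresponding to roots t_i - t_j (i ≤ k < j), t_i + t_j (i ≤ k < j ≤ n+1), and 2t_i (i ≤ k) have degree 1. -/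
/-!
The degree of the edge for `α` is `⟨ω_k, α^∨⟩`, where `ω_k` is the `k`-th fundamental weight:
the simple coroots form a `ℤ`-basis of the coweight lattice (`t_j = ∑_{l ≥ j} α_l^∨`), and
`ω_k` is the coordinate dual to `α_k^∨`, so `ℤΔ_{P_k}^∨` is exactly the kernel of `ω_k`.
Pairing `ω_k` with `t_i ± t_j` and `t_i` gives the four degrees.
-/

def epi (n : ℕ) (i : Fin (n+1)) : Fin (n+1) → ℤ := Pi.single i 1

def cosimple (n : ℕ) (i : Fin (n+1)) : Fin (n+1) → ℤ :=
  if h : (i : ℕ) < n then epi n i - epi n ⟨(i : ℕ)+1, by omega⟩ else epi n i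

def cospanP (n : ℕ) (k : Fin (n+1)) : Submodule ℤ (Fin (n+1) → ℤ) :=
  Submodule.span ℤ {x | ∃ i : Fin (n+1), i ≠ k ∧ x = cosimple n i}

namespace TypeC

variable (n : ℕ)

lemma cosimple_last : cosimple n (Fin.last n) = epi n (Fin.last n) := by
  simp [cosimple]

lemma cosimple_castSucc (j : Fin n) :
    cosimple n j.castSucc = epi n j.castSucc - epi n j.succ := by
  simp [cosimple, Fin.succ]

lemma epi_eq_sum_cosimple (j : Fin (n+1)) :
    epi n j = ∑ l ∈ Finset.Ici j, cosimple n l := by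
  induction j using Fin.reverseInduction with
  | last => rw [← Fin.top_eq_last, Finset.Ici_top, Finset.sum_singleton, Fin.top_eq_last,
      cosimple_last]
  | cast j ih =>
    rw [Finset.Ici_eq_cons_Ioi, Finset.sum_cons,
      ← Finset.Ici_succ_eq_Ioi_of_not_isMax (Fin.castSucc_lt_last j).not_isMax,
      Fin.orderSucc_castSucc, ← ih, cosimple_castSucc, sub_add_cancel]

variable (k : Fin (n+1))

/-- Pairing with the fundamental weight `ω_k = t_0 + ⋯ + t_k` (indices `0`-based, as in `epi`). -/
def fundamentalWeight : (Fin (n+1) → ℤ) →ₗ[ℤ] ℤ :=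
  ∑ i ∈ Finset.Iic k, LinearMap.proj i

lemma fundamentalWeight_epi (i : Fin (n+1)) :
    fundamentalWeight n k (epi n i) = if i ≤ k then 1 else 0 := by
  simp [fundamentalWeight, epi, Pi.single_apply]

lemma fundamentalWeight_cosimple (i : Fin (n+1)) :
    fundamentalWeight n k (cosimple n i) = if i = k then 1 else 0 := by
  induction i using Fin.lastCases with
  | last => simp [cosimple_last, fundamentalWeight_epi, Fin.last_le_iff, eq_comm]
  | cast j =>
    rw [cosimple_castSucc, map_sub, fundamentalWeight_epi, fundamentalWeight_epi]
    simp only [Fin.le_iff_val_le_val, Fin.ext_iff, Fin.val_castSucc, Fin.val_succ]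
    split_ifs <;> omega

lemma cospanP_le_ker_fundamentalWeight :
    cospanP n k ≤ LinearMap.ker (fundamentalWeight n k) := by
  rw [cospanP, Submodule.span_le]
  rintro _ ⟨i, hi, rfl⟩
  simp [fundamentalWeight_cosimple, hi]

lemma epi_sub_smul_cosimple_mem_cospanP (j : Fin (n+1)) :
    epi n j - fundamentalWeight n k (epi n j) • cosimple n k ∈ cospanP n k := by
  have mem {s : Finset (Fin (n+1))} (hs : k ∉ s) : ∑ l ∈ s, cosimple n l ∈ cospanP n k :=
    Submodule.sum_mem _ fun l hl => Submodule.subset_span ⟨l, ne_of_mem_of_not_mem hl hs, rfl⟩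
  rw [fundamentalWeight_epi, epi_eq_sum_cosimple]
  split_ifs with hjk
  · rw [one_smul, ← Finset.sum_erase_eq_sub (Finset.mem_Ici.2 hjk)]
    exact mem (Finset.notMem_erase k _)
  · rw [zero_smul, sub_zero]
    exact mem (by simpa using hjk)

lemma sub_smul_cosimple_mem_cospanP (x : Fin (n+1) → ℤ) :
    x - fundamentalWeight n k x • cosimple n k ∈ cospanP n k := by
  let ψ := LinearMap.id - (fundamentalWeight n k).smulRight (cosimple n k)
  have : ⊤ ≤ (cospanP n k).comap ψ := by
    rw [← (Pi.basisFun ℤ (Fin (n+1))).span_eq, Submodule.span_le]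
    rintro _ ⟨i, rfl⟩
    simpa [ψ, epi] using epi_sub_smul_cosimple_mem_cospanP n k i
  simpa [ψ] using this (Submodule.mem_top (x := x))

theorem sub_smul_cosimple_mem_cospanP_iff (x : Fin (n+1) → ℤ) (d : ℤ) :
    x - d • cosimple n k ∈ cospanP n k ↔ d = fundamentalWeight n k x := by
  refine ⟨fun h => ?_, fun h => h ▸ sub_smul_cosimple_mem_cospanP n k x⟩
  have hker := cospanP_le_ker_fundamentalWeight n k h
  rw [LinearMap.mem_ker, map_sub, map_smul, fundamentalWeight_cosimple, if_pos rfl] at hker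
  simp only [smul_eq_mul, mul_one] at hker
  omega

lemma sub_smul_cosimple_mem_cospanP_and_unique (x : Fin (n+1) → ℤ) {d₀ : ℤ}
    (hx : fundamentalWeight n k x = d₀) :
    x - d₀ • cosimple n k ∈ cospanP n k ∧
      ∀ d : ℤ, x - d • cosimple n k ∈ cospanP n k → d = d₀ := by
  subst hx
  exact ⟨(sub_smul_cosimple_mem_cospanP_iff n k x _).2 rfl,
    fun d => (sub_smul_cosimple_mem_cospanP_iff n k x d).1⟩

end TypeC

open TypeC in
/-- Degrees of the edges at the identity in the moment graph of `IG(k, 2n+2)` (indices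
0-based): the edge for `α = t_i + t_j` with `i < j ≤ k` has degree `2`
(`α^∨ ≡ 2α_k^∨ mod ℤΔ_{P_k}^∨`), while the edges for `t_i - t_j` (`i ≤ k < j`),
`t_i + t_j` (`i ≤ k < j`) and `2t_i` (`i ≤ k`, with `(2t_i)^∨ = t_i`) have degree `1`. -/
theorem stmt13 (n : ℕ) (k : Fin (n+1)) :
    (∀ i j : Fin (n+1), i < j → j ≤ k →
      (epi n i + epi n j - (2 : ℤ) • cosimple n k ∈ cospanP n k ∧
        ∀ d : ℤ, epi n i + epi n j - d • cosimple n k ∈ cospanP n k → d = 2)) ∧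
    (∀ i j : Fin (n+1), i ≤ k → k < j →
      (epi n i - epi n j - cosimple n k ∈ cospanP n k ∧
        ∀ d : ℤ, epi n i - epi n j - d • cosimple n k ∈ cospanP n k → d = 1)) ∧
    (∀ i j : Fin (n+1), i ≤ k → k < j →
      (epi n i + epi n j - cosimple n k ∈ cospanP n k ∧
        ∀ d : ℤ, epi n i + epi n j - d • cosimple n k ∈ cospanP n k → d = 1)) ∧
    (∀ i : Fin (n+1), i ≤ k →
      (epi n i - cosimple n k ∈ cospanP n k ∧
        ∀ d : ℤ, epi n i - d • cosimple n k ∈ cospanP n k → d = 1)) := by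
  have degree := sub_smul_cosimple_mem_cospanP_and_unique n k
  refine ⟨fun i j hij hjk => ?_, fun i j hik hkj => ?_, fun i j hik hkj => ?_, fun i hik => ?_⟩
  · exact degree _ (by simp [fundamentalWeight_epi, (hij.trans_le hjk).le, hjk])
  · simpa using degree (epi n i - epi n j) (d₀ := 1)
      (by simp [fundamentalWeight_epi, hik, hkj.not_ge])
  · simpa using degree (epi n i + epi n j) (d₀ := 1)
      (by simp [fundamentalWeight_epi, hik, hkj.not_ge])
  · simpa using degree (epi n i) (d₀ := 1) (by simp [fundamentalWeight_epi, hik])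
end
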